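/- Let A ∈ ℂ^{2n×2n} and C ∈ ℂ^{2m×2n} be arbitrary, and let (Ã, B̃, C̃) be the cascade realisation Ã := [−A♭, 0; C♭V_vac C, A], B̃ := [−C♭; −C♭V_vac], C̃ := [−V_vac C, C]. Then for every s ∈ ℂ that is neither an eigenvalue of A nor an eigenvalue of −A♭, the power spectrum satisfies Ψ(s) J_m = V_vac + C̃ (s·1_{4n} − Ã)⁻¹ B̃, where Ψ(s) := Ξ(s) V_vac Ξ(−s̄)† and Ξ(s) := 1_{2m} − C(s·1_{2n} − A)⁻¹C♭. -/

import Mathlib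

open Matrix

noncomputable section

/-- The canonical equivalence `Fin n ⊕ Fin n ≃ Fin (2*n)`. -/
def dEquiv (n : ℕ) : Fin n ⊕ Fin n ≃ Fin (2*n) :=
  finSumFinEquiv.trans (finCongr (two_mul n).symm)

/-- The matrix `J_n = diag(1_n, -1_n)`. -/
def Jmat (n : ℕ) : Matrix (Fin (2*n)) (Fin (2*n)) ℂ :=
  Matrix.reindex (dEquiv n) (dEquiv n) (Matrix.fromBlocks 1 0 0 (-1))

/-- `Z♭ := J_b Zᴴ J_a` for `Z : ℂ^{2a × 2b}`. -/
def flat {a b : ℕ} (Z : Matrix (Fin (2*a)) (Fin (2*b)) ℂ) :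
    Matrix (Fin (2*b)) (Fin (2*a)) ℂ :=
  Jmat b * Zᴴ * Jmat a

/-- A matrix is doubled-up if it has the block form `[X₋, X₊; conj X₊, conj X₋]`. -/
def DoubledUp {a b : ℕ} (X : Matrix (Fin (2*a)) (Fin (2*b)) ℂ) : Prop :=
  ∃ Xm Xp : Matrix (Fin a) (Fin b) ℂ,
    X = Matrix.reindex (dEquiv a) (dEquiv b)
      (Matrix.fromBlocks Xm Xp (Xp.map (starRingEnd ℂ)) (Xm.map (starRingEnd ℂ)))

/-- `S` is ♭-unitary if `S♭S = SS♭ = 1`. -/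
def FlatUnitary {m : ℕ} (S : Matrix (Fin (2*m)) (Fin (2*m)) ℂ) : Prop :=
  flat S * S = 1 ∧ S * flat S = 1

/-- `S` is symplectic if it is ♭-unitary and doubled-up. -/
def Symplectic {m : ℕ} (S : Matrix (Fin (2*m)) (Fin (2*m)) ℂ) : Prop :=
  DoubledUp S ∧ FlatUnitary S

/-- The vacuum covariance matrix `V_vac = [1_m, 0; 0, 0]`. -/
def Vvac (m : ℕ) : Matrix (Fin (2*m)) (Fin (2*m)) ℂ :=
  Matrix.reindex (dEquiv m) (dEquiv m) (Matrix.fromBlocks 1 0 0 0)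

/-- A quantum linear system: doubled-up matrices satisfying physical realisability. -/
def IsQLS {n m : ℕ} (A : Matrix (Fin (2*n)) (Fin (2*n)) ℂ)
    (C : Matrix (Fin (2*m)) (Fin (2*n)) ℂ) : Prop :=
  DoubledUp A ∧ DoubledUp C ∧ A + flat A + flat C * C = 0

/-- The transfer function `Ξ(s) = 1 - C (s - A)⁻¹ C♭`. -/
def transferFn {n m : ℕ} (A : Matrix (Fin (2*n)) (Fin (2*n)) ℂ)
    (C : Matrix (Fin (2*m)) (Fin (2*n)) ℂ) (s : ℂ) :
    Matrix (Fin (2*m)) (Fin (2*m)) ℂ :=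
  1 - C * (s • (1 : Matrix (Fin (2*n)) (Fin (2*n)) ℂ) - A)⁻¹ * flat C

/-- The power spectrum with vacuum input: `Ψ(s) = Ξ(s) V_vac Ξ(-s̄)ᴴ`. -/
def powerSpectrum {n m : ℕ} (A : Matrix (Fin (2*n)) (Fin (2*n)) ℂ)
    (C : Matrix (Fin (2*m)) (Fin (2*n)) ℂ) (s : ℂ) :
    Matrix (Fin (2*m)) (Fin (2*m)) ℂ :=
  transferFn A C s * Vvac m * (transferFn A C (-(starRingEnd ℂ s)))ᴴ

/-- The set of points at which the power spectrum is defined. -/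
def psDefined {n : ℕ} (A : Matrix (Fin (2*n)) (Fin (2*n)) ℂ) (s : ℂ) : Prop :=
  s ∉ spectrum ℂ A ∧ (-(starRingEnd ℂ s)) ∉ spectrum ℂ A

/-- Hurwitz stability: all eigenvalues have strictly negative real part. -/
def Hurwitz {I : Type*} [Fintype I] [DecidableEq I] (A : Matrix I I ℂ) : Prop :=
  ∀ lam ∈ spectrum ℂ A, lam.re < 0

/-- The controllability matrix `[B, AB, …, A^{N-1}B]` (columns indexed by pairs). -/
def ctrbMat {I J : Type*} [Fintype I] [DecidableEq I] [Fintype J]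
    (A : Matrix I I ℂ) (B : Matrix I J ℂ) :
    Matrix I (Fin (Fintype.card I) × J) ℂ :=
  Matrix.of fun i p => (A ^ (p.1 : ℕ) * B) i p.2

/-- `(A, B)` is controllable if the controllability matrix has full rank. -/
def Controllable {I J : Type*} [Fintype I] [DecidableEq I] [Fintype J] [DecidableEq J]
    (A : Matrix I I ℂ) (B : Matrix I J ℂ) : Prop :=
  (ctrbMat A B).rank = Fintype.card I

/-- The observability matrix `[C; CA; …; CA^{N-1}]` (rows indexed by pairs). -/
def obsMat {I J : Type*} [Fintype I] [DecidableEq I] [Fintype J]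
    (C : Matrix J I ℂ) (A : Matrix I I ℂ) :
    Matrix (Fin (Fintype.card I) × J) I ℂ :=
  Matrix.of fun p j => (C * A ^ (p.1 : ℕ)) p.2 j

/-- `(C, A)` is observable if the observability matrix has full rank. -/
def Observable {I J : Type*} [Fintype I] [DecidableEq I] [Fintype J]
    (C : Matrix J I ℂ) (A : Matrix I I ℂ) : Prop :=
  (obsMat C A).rank = Fintype.card I

/-- Minimality of a QLS `(A, C)`, with input matrix `B = -C♭`. -/
def MinimalQLS {n m : ℕ} (A : Matrix (Fin (2*n)) (Fin (2*n)) ℂ)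
    (C : Matrix (Fin (2*m)) (Fin (2*n)) ℂ) : Prop :=
  Controllable A (-(flat C)) ∧ Observable C A

/-- Global minimality for vacuum input: no strictly smaller QLS has the same
power spectrum wherever both are defined. -/
def GloballyMinimal {n m : ℕ} (A : Matrix (Fin (2*n)) (Fin (2*n)) ℂ)
    (C : Matrix (Fin (2*m)) (Fin (2*n)) ℂ) : Prop :=
  ¬ ∃ n' : ℕ, n' < n ∧ ∃ (A' : Matrix (Fin (2*n')) (Fin (2*n')) ℂ)
      (C' : Matrix (Fin (2*m)) (Fin (2*n')) ℂ), IsQLS A' C' ∧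
      ∀ s : ℂ, psDefined A s → psDefined A' s →
        powerSpectrum A C s = powerSpectrum A' C' s

/-- The `Ã` matrix of the cascade realisation of the power spectrum. -/
def cascadeA {n m : ℕ} (A : Matrix (Fin (2*n)) (Fin (2*n)) ℂ)
    (C : Matrix (Fin (2*m)) (Fin (2*n)) ℂ) :
    Matrix (Fin (2*n) ⊕ Fin (2*n)) (Fin (2*n) ⊕ Fin (2*n)) ℂ :=
  Matrix.fromBlocks (-(flat A)) 0 (flat C * Vvac m * C) A

/-- The `B̃` matrix of the cascade realisation. -/
def cascadeB {n m : ℕ} (A : Matrix (Fin (2*n)) (Fin (2*n)) ℂ)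
    (C : Matrix (Fin (2*m)) (Fin (2*n)) ℂ) :
    Matrix (Fin (2*n) ⊕ Fin (2*n)) (Fin (2*m)) ℂ :=
  Matrix.fromRows (-(flat C)) (-(flat C * Vvac m))

/-- The `C̃` matrix of the cascade realisation. -/
def cascadeC {n m : ℕ} (A : Matrix (Fin (2*n)) (Fin (2*n)) ℂ)
    (C : Matrix (Fin (2*m)) (Fin (2*n)) ℂ) :
    Matrix (Fin (2*m)) (Fin (2*n) ⊕ Fin (2*n)) ℂ :=
  Matrix.fromCols (-(Vvac m * C)) C

/-- `K := [J_n, 0; 0, -J_n]`. -/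
def Kmat (n : ℕ) : Matrix (Fin (2*n) ⊕ Fin (2*n)) (Fin (2*n) ⊕ Fin (2*n)) ℂ :=
  Matrix.fromBlocks (Jmat n) 0 0 (-(Jmat n))

/-- `Σ := [0, 1; 1, 0]` (on the doubled index). -/
def SigmaBig (n : ℕ) : Matrix (Fin (2*n) ⊕ Fin (2*n)) (Fin (2*n) ⊕ Fin (2*n)) ℂ :=
  Matrix.fromBlocks 0 1 1 0


lemma Jmat_mul_Jmat (n : ℕ) : Jmat n * Jmat n = 1 := by
  unfold Jmat
  rw [reindex_apply, Matrix.submatrix_mul_equiv, Matrix.fromBlocks_multiply]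
  simp [Matrix.submatrix_one_equiv]

lemma Jmat_conjTranspose (n : ℕ) : (Jmat n)ᴴ = Jmat n := by
  unfold Jmat
  rw [reindex_apply, Matrix.conjTranspose_submatrix, Matrix.fromBlocks_conjTranspose]
  simp

lemma Vvac_mul_Jmat (m : ℕ) : Vvac m * Jmat m = Vvac m := by
  unfold Vvac Jmat
  rw [reindex_apply, reindex_apply, Matrix.submatrix_mul_equiv, Matrix.fromBlocks_multiply]
  simp


lemma sandwich2 {a b c : ℕ} (X : Matrix (Fin (2*a)) (Fin (2*b)) ℂ)
    (Y : Matrix (Fin (2*b)) (Fin (2*c)) ℂ) :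
    (Jmat a * X * Jmat b) * (Jmat b * Y * Jmat c) = Jmat a * (X * Y) * Jmat c := by
  have h : Jmat b * (Jmat b * (Y * Jmat c)) = Y * Jmat c := by
    rw [← Matrix.mul_assoc, Jmat_mul_Jmat, Matrix.one_mul]
  simp only [Matrix.mul_assoc, h]

/-- the power spectrum is the transfer function of the cascade
realisation: `Ψ(s) J_m = V_vac + C̃ (s - Ã)⁻¹ B̃`. -/
theorem power_spectrum_cascade_realisation {n m : ℕ}
    (A : Matrix (Fin (2*n)) (Fin (2*n)) ℂ) (C : Matrix (Fin (2*m)) (Fin (2*n)) ℂ) :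
    ∀ s : ℂ, s ∉ spectrum ℂ A → s ∉ spectrum ℂ (-(flat A)) →
      powerSpectrum A C s * Jmat m =
        Vvac m + cascadeC A C *
          (s • (1 : Matrix (Fin (2*n) ⊕ Fin (2*n)) (Fin (2*n) ⊕ Fin (2*n)) ℂ)
            - cascadeA A C)⁻¹ * cascadeB A C := by
  intro s h1 h2
  have hU1 : IsUnit (s • (1 : Matrix (Fin (2*n)) (Fin (2*n)) ℂ) - A) := by
    have := spectrum.notMem_iff.mp h1
    rwa [Algebra.algebraMap_eq_smul_one] at this
  have hU2 : IsUnit (s • (1 : Matrix (Fin (2*n)) (Fin (2*n)) ℂ) + flat A) := by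
    have := spectrum.notMem_iff.mp h2
    rwa [Algebra.algebraMap_eq_smul_one, sub_neg_eq_add] at this
  set G1 := (s • (1 : Matrix (Fin (2*n)) (Fin (2*n)) ℂ) - A)⁻¹ with hG1
  set G2 := (s • (1 : Matrix (Fin (2*n)) (Fin (2*n)) ℂ) + flat A)⁻¹ with hG2
  have hd1 := (Matrix.isUnit_iff_isUnit_det _).mp hU1
  have hd2 := (Matrix.isUnit_iff_isUnit_det _).mp hU2
  have h11 : (s • (1 : Matrix (Fin (2*n)) (Fin (2*n)) ℂ) - A) * G1 = 1 :=
    Matrix.mul_nonsing_inv _ hd1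
  have h21 : (s • (1 : Matrix (Fin (2*n)) (Fin (2*n)) ℂ) + flat A) * G2 = 1 :=
    Matrix.mul_nonsing_inv _ hd2
  -- conjugate-transpose facts
  have hAH : Aᴴ = Jmat n * flat A * Jmat n := by
    have : Jmat n * (flat A) * Jmat n = Aᴴ := by
      show Jmat n * (Jmat n * Aᴴ * Jmat n) * Jmat n = Aᴴ
      have h : Jmat n * (Jmat n * (Aᴴ * (Jmat n * Jmat n))) = Aᴴ := by
        rw [Jmat_mul_Jmat, Matrix.mul_one, ← Matrix.mul_assoc, Jmat_mul_Jmat, Matrix.one_mul]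
      simp only [Matrix.mul_assoc, h]
    exact this.symm
  have hFH : (flat C)ᴴ = Jmat m * C * Jmat n := by
    show (Jmat n * Cᴴ * Jmat m)ᴴ = Jmat m * C * Jmat n
    simp only [Matrix.conjTranspose_mul, Matrix.conjTranspose_conjTranspose,
      Jmat_conjTranspose, Matrix.mul_assoc]
  have hCH : Cᴴ = Jmat n * flat C * Jmat m := by
    have : Jmat n * flat C * Jmat m = Cᴴ := by
      show Jmat n * (Jmat n * Cᴴ * Jmat m) * Jmat m = Cᴴ
      have h : Jmat n * (Jmat n * (Cᴴ * (Jmat m * Jmat m))) = Cᴴ := by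
        rw [Jmat_mul_Jmat, Matrix.mul_one, ← Matrix.mul_assoc, Jmat_mul_Jmat, Matrix.one_mul]
      simp only [Matrix.mul_assoc, h]
    exact this.symm
  have hNH : ((-(starRingEnd ℂ s)) • (1 : Matrix (Fin (2*n)) (Fin (2*n)) ℂ) - A)ᴴ
      = -(Jmat n * (s • 1 + flat A) * Jmat n) := by
    rw [Matrix.conjTranspose_sub, Matrix.conjTranspose_smul, Matrix.conjTranspose_one, hAH]
    have hs : star (-(starRingEnd ℂ s)) = -s := by simp
    have hJ1 : Jmat n * (s • (1 : Matrix (Fin (2*n)) (Fin (2*n)) ℂ)) * Jmat n = s • 1 := by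
      rw [Matrix.mul_smul, Matrix.smul_mul, Matrix.mul_one, Jmat_mul_Jmat]
    rw [hs, neg_smul, Matrix.mul_add, Matrix.add_mul, hJ1, neg_add]
    abel
  have hNinvH : (((-(starRingEnd ℂ s)) • (1 : Matrix (Fin (2*n)) (Fin (2*n)) ℂ) - A)⁻¹)ᴴ
      = -(Jmat n * G2 * Jmat n) := by
    rw [Matrix.conjTranspose_nonsing_inv, hNH]
    apply Matrix.inv_eq_right_inv
    rw [neg_mul_neg, sandwich2, h21, Matrix.mul_one, Jmat_mul_Jmat]
  have hXiH : (transferFn A C (-(starRingEnd ℂ s)))ᴴ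
      = 1 + Jmat m * (C * G2 * flat C) * Jmat m := by
    unfold transferFn
    rw [Matrix.conjTranspose_sub, Matrix.conjTranspose_one, Matrix.conjTranspose_mul,
      Matrix.conjTranspose_mul, hNinvH, hFH, hCH]
    rw [Matrix.neg_mul, Matrix.mul_neg, sub_neg_eq_add, ← Matrix.mul_assoc,
      sandwich2, sandwich2]
  -- the inverse of the cascade matrix
  have hblock : s • (1 : Matrix (Fin (2*n) ⊕ Fin (2*n)) (Fin (2*n) ⊕ Fin (2*n)) ℂ)
      - cascadeA A C
      = Matrix.fromBlocks (s • 1 + flat A) 0 (-(flat C * Vvac m * C)) (s • 1 - A) := by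
    unfold cascadeA
    rw [← Matrix.fromBlocks_one, Matrix.fromBlocks_smul]
    ext (i | i) (j | j) <;>
      simp [Matrix.fromBlocks, Matrix.sub_apply, sub_neg_eq_add]
  have hD : (s • (1 : Matrix (Fin (2*n) ⊕ Fin (2*n)) (Fin (2*n) ⊕ Fin (2*n)) ℂ)
      - cascadeA A C)⁻¹
      = Matrix.fromBlocks G2 0 (G1 * (flat C * Vvac m * C) * G2) G1 := by
    apply Matrix.inv_eq_right_inv
    rw [hblock, Matrix.fromBlocks_multiply]
    have e21 : -(flat C * Vvac m * C) * G2
        + (s • 1 - A) * (G1 * (flat C * Vvac m * C) * G2) = 0 := by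
      have : (s • (1 : Matrix (Fin (2*n)) (Fin (2*n)) ℂ) - A)
          * (G1 * (flat C * Vvac m * C) * G2) = (flat C * Vvac m * C) * G2 := by
        rw [← Matrix.mul_assoc, ← Matrix.mul_assoc, h11, Matrix.one_mul]
      rw [this, Matrix.neg_mul, neg_add_cancel]
    rw [h21, e21, h11]
    simp [Matrix.fromBlocks_one]
  rw [hD]
  -- compute the RHS product
  unfold cascadeC cascadeB
  rw [Matrix.fromCols_mul_fromBlocks, Matrix.fromCols_mul_fromRows]
  -- compute the LHS
  unfold powerSpectrum
  rw [hXiH]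
  have hJX : (1 + Jmat m * (C * G2 * flat C) * Jmat m) * Jmat m
      = Jmat m + Jmat m * (C * G2 * flat C) := by
    rw [Matrix.add_mul, Matrix.one_mul, Matrix.mul_assoc, Matrix.mul_assoc, Jmat_mul_Jmat,
      Matrix.mul_one, ← Matrix.mul_assoc]
  rw [Matrix.mul_assoc (transferFn A C s * Vvac m), hJX]
  have hVJ : Vvac m * (Jmat m + Jmat m * (C * G2 * flat C))
      = Vvac m + Vvac m * (C * G2 * flat C) := by
    rw [Matrix.mul_add, Vvac_mul_Jmat, ← Matrix.mul_assoc, Vvac_mul_Jmat]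
  rw [Matrix.mul_assoc (transferFn A C s), hVJ]
  unfold transferFn
  rw [← hG1]
  -- now pure algebra
  simp only [Matrix.sub_mul, Matrix.mul_sub, Matrix.add_mul, Matrix.mul_add, Matrix.neg_mul,
    Matrix.mul_neg, Matrix.mul_zero, Matrix.zero_mul, Matrix.one_mul, Matrix.mul_one,
    add_zero, zero_add, Matrix.mul_assoc]
  abel

end
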